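/- arXiv:1810.01518 — 2 statements merged into one kernel-verified Lean document; each statement's English description precedes it below -/
import Mathlib

section
/- If A ≤ ℚ₊ is a multiplicative subgroup of finite index and A* := A ∩ ℤ₊, then A* is an IP-set; in particular A* is infinite and nonempty. -/
/-- The multiplicative group of positive rationals, as a subgroup of `ℚˣ`. -/
def posRat : Subgroup ℚˣ where
  carrier := {x | 0 < (x : ℚ)}
  one_mem' := by norm_num
  mul_mem' := by
    intro a b ha hb
    simp only [Set.mem_setOf_eq, Units.val_mul] at *
    exact mul_pos ha hb
  inv_mem' := by
    intro x hx
    simp only [Set.mem_setOf_eq] at *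
    rw [Units.val_inv_eq_inv_val]
    exact inv_pos.mpr hx

/-- `A* = A ∩ ℤ₊`: the set of positive integers lying in `A`. -/
def posIntSet (A : Subgroup ↥posRat) : Set ℕ :=
  {n | 0 < n ∧ ∃ x ∈ A, ((x : ℚˣ) : ℚ) = (n : ℚ)}

/-!
Colour each positive integer `n` by the coset of `n` modulo `A`; there are finitely many colours.
By Hindman's theorem some colour class `q A` contains all finite sums of a sequence `b`. With
`k` the index of `A`, the multiplier `m = b₀ ^ (k - 1)` lies in `q⁻¹ A`, so multiplying the
sequence by `m` moves all its finite sums into `A`.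
-/

namespace Hindman

theorem FS_map_subset_image {M N : Type*} [AddSemigroup M] [AddSemigroup N] (f : M →ₙ+ N)
    (a : Stream' M) : FS (a.map f) ⊆ f '' FS a := by
  intro n hn
  generalize hc : a.map f = c at hn
  induction hn generalizing a with
  | head' c => exact ⟨a.head, FS.head a, by rw [← hc, Stream'.head_map]⟩
  | tail' c n _ ih =>
    obtain ⟨x, hx, rfl⟩ := ih a.tail (by rw [← hc, Stream'.tail_map])
    exact ⟨x, FS.tail a x hx, rfl⟩
  | cons' c n _ ih =>
    obtain ⟨x, hx, rfl⟩ := ih a.tail (by rw [← hc, Stream'.tail_map])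
    exact ⟨a.head + x, FS.cons a x hx, by rw [← hc, Stream'.head_map, map_add]⟩

end Hindman

def IsIPSet (M : Set ℕ) : Prop :=
  ∃ a : ℕ → ℕ, (∀ i, 0 < a i) ∧ ∀ I : Finset ℕ, I.Nonempty → (∑ i ∈ I, a i) ∈ M

namespace IsIPSet

variable {M N : Set ℕ}

theorem mono (h : IsIPSet M) (hMN : M ⊆ N) : IsIPSet N :=
  let ⟨a, ha, hsum⟩ := h
  ⟨a, ha, fun I hI => hMN (hsum I hI)⟩

theorem nonempty (h : IsIPSet M) : M.Nonempty :=
  let ⟨_, _, hsum⟩ := h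
  ⟨_, hsum {0} (Finset.singleton_nonempty 0)⟩

theorem infinite (h : IsIPSet M) : M.Infinite := by
  obtain ⟨a, ha, hsum⟩ := h
  refine Set.infinite_of_forall_exists_gt fun N => ⟨_, hsum (Finset.range (N + 1)) (by simp), ?_⟩
  calc N < (Finset.range (N + 1)).card • 1 := by simp
    _ ≤ ∑ i ∈ Finset.range (N + 1), a i := Finset.card_nsmul_le_sum _ _ _ fun i _ => ha i

theorem image_mul_left (h : IsIPSet M) {m : ℕ} (hm : 0 < m) : IsIPSet ((m * ·) '' M) := by
  obtain ⟨a, ha, hsum⟩ := h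
  refine ⟨fun i => m * a i, fun i => Nat.mul_pos hm (ha i), fun I hI => ?_⟩
  rw [← Finset.mul_sum]
  exact Set.mem_image_of_mem _ (hsum I hI)

end IsIPSet

theorem isIPSet_image_FS (b : Stream' ℕ+) : IsIPSet ((↑) '' Hindman.FS b) :=
  ⟨fun i => b.get i, fun i => (b.get i).pos, fun I hI =>
    Hindman.FS_map_subset_image PNat.coeAddHom b (Hindman.FS.finsetSum _ I hI)⟩

theorem exists_FS_subset_fiber {Q : Type*} [Finite Q] (χ : ℕ+ → Q) :
    ∃ q, ∃ b : Stream' ℕ+, Hindman.FS b ⊆ χ ⁻¹' {q} := by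
  obtain ⟨_, ⟨q, rfl⟩, b, hb⟩ := Hindman.exists_FS_of_finite_cover
    (Set.range fun q => χ ⁻¹' {q}) (Set.finite_range _)
    (fun n _ => Set.mem_sUnion_of_mem (t := χ ⁻¹' {χ n}) rfl ⟨χ n, rfl⟩)
  exact ⟨q, b, hb⟩

theorem isIPSet_image_mker {Q : Type*} [Group Q] [Finite Q] (χ : ℕ+ →* Q) :
    IsIPSet ((↑) '' (MonoidHom.mker χ : Set ℕ+)) := by
  obtain ⟨q, b, hb⟩ := exists_FS_subset_fiber χ
  have hq : χ b.head = q := hb (Hindman.FS.head b)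
  set m := b.head ^ (Nat.card Q - 1)
  have hm : χ m * q = 1 := by
    rw [map_pow, hq, ← pow_succ, Nat.sub_add_cancel Nat.card_pos, pow_card_eq_one']
  refine ((isIPSet_image_FS b).image_mul_left m.pos).mono ?_
  rintro _ ⟨_, ⟨x, hx, rfl⟩, rfl⟩
  refine ⟨m * x, ?_, PNat.mul_coe m x⟩
  rw [SetLike.mem_coe, MonoidHom.mem_mker, map_mul, hb hx, hm]

theorem isIPSet_image_preimage_of_finiteIndex {G : Type*} [Group G] (H : Subgroup G) [H.Normal]
    [H.FiniteIndex] (f : ℕ+ →* G) : IsIPSet ((↑) '' (f ⁻¹' H)) := by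
  convert isIPSet_image_mker ((QuotientGroup.mk' H).comp f) using 3
  ext n
  simp [MonoidHom.mem_mker, QuotientGroup.eq_one_iff]

def pnatToPosRat : ℕ+ →* posRat where
  toFun n := ⟨Units.mk0 (n : ℚ) (by positivity), show (0 : ℚ) < n by positivity⟩
  map_one' := by ext; simp
  map_mul' m n := by ext; simp

theorem posIntSet_eq_image (A : Subgroup posRat) :
    posIntSet A = (↑) '' (pnatToPosRat ⁻¹' A) := by
  ext n
  constructor
  · rintro ⟨hn, x, hx, hxn⟩
    have : x = pnatToPosRat ⟨n, hn⟩ := by ext; simpa [pnatToPosRat] using hxn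
    exact ⟨⟨n, hn⟩, show pnatToPosRat ⟨n, hn⟩ ∈ A by rwa [← this], rfl⟩
  · rintro ⟨n, hn, rfl⟩
    exact ⟨n.pos, _, hn, by simp [pnatToPosRat]⟩

/-- If `A ≤ ℚ₊` has finite index, then `A*` is an IP-set; in particular `A*`
is infinite and nonempty. -/
theorem posIntSet_IPset (A : Subgroup ↥posRat) (hA : A.FiniteIndex) :
    (∃ a : ℕ → ℕ, (∀ i, 0 < a i) ∧
        ∀ I : Finset ℕ, I.Nonempty → (∑ i ∈ I, a i) ∈ posIntSet A) ∧
      (posIntSet A).Infinite ∧ (posIntSet A).Nonempty := by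
  have hIP : IsIPSet (posIntSet A) := by
    rw [posIntSet_eq_image]
    exact isIPSet_image_preimage_of_finiteIndex A pnatToPosRat
  exact ⟨hIP, hIP.infinite, hIP.nonempty⟩
end

section
/- Let A ≤ ℚ₊ be a multiplicative subgroup of finite index. Then there exist infinitely many positive integers a with a ∈ A and a + 1 ∈ A. -/
/-!
Color each positive integer `n` by its class in the finite group `ℚ₊ ⧸ A`. By Hindman's theorem
some infinite sequence has all its finite sums of one color. Pigeonholing the partial sums of the
tail modulo the first term `x` yields a block sum `x * y` of the tail, so `x`, `x * y` and
`x + x * y = x * (y + 1)` are finite sums of that sequence and share a color. As the coloring is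
multiplicative, `y` and `y + 1` both have the trivial color, i.e. lie in `A`; and `y` can be taken
arbitrarily large.
-/

namespace Hindman

theorem exists_mem_FS_coe_eq_sum_range (a : Stream' ℕ+) (n : ℕ) :
    ∃ u ∈ FS a, (u : ℕ) = ∑ t ∈ Finset.range (n + 1), (a.get t : ℕ) := by
  induction n generalizing a with
  | zero => exact ⟨a.head, FS.head a, by simp [Stream'.head]⟩
  | succ n ih =>
    obtain ⟨u, hu, hsum⟩ := ih a.tail
    refine ⟨a.head + u, FS.cons a u hu, ?_⟩
    simp only [Finset.sum_range_succ' _ (n + 1), PNat.add_coe, hsum, Stream'.get_succ]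
    simp [Stream'.head, add_comm]

theorem exists_mem_FS_dvd_lt (a : Stream' ℕ+) (k : ℕ+) (B : ℕ) :
    ∃ u ∈ FS a, k ∣ u ∧ B < (u : ℕ) := by
  set S : ℕ → ℕ := fun n => ∑ t ∈ Finset.range n, (a.get t : ℕ)
  obtain ⟨i, j, hij, hS⟩ : ∃ i j, i + B < j ∧ S i ≡ S j [MOD k] := by
    -- lengths divisible by `B + 1` keep the two partial sums more than `B` apart
    obtain ⟨l, l', hne, heq⟩ :=
      Finite.exists_ne_map_eq_of_infinite fun l => (S ((B + 1) * l) : ZMod k)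
    rw [ZMod.natCast_eq_natCast_iff] at heq
    rcases hne.lt_or_gt with h | h
    · exact ⟨_, _, by nlinarith, heq⟩
    · exact ⟨_, _, by nlinarith, heq.symm⟩
  obtain ⟨n, rfl⟩ := Nat.exists_eq_add_of_lt (show i < j by omega)
  obtain ⟨u, hu, hsum⟩ := exists_mem_FS_coe_eq_sum_range (a.drop i) n
  have hsplit : S (i + n + 1) = S i + u := by
    simp only [S, add_assoc, Finset.sum_range_add, hsum, Stream'.get_drop]
  have hlen : n + 1 ≤ (u : ℕ) := by
    have := Finset.card_nsmul_le_sum (Finset.range (n + 1)) (fun t => ((a.drop i).get t : ℕ)) 1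
      fun t _ => ((a.drop i).get t).pos
    rwa [Finset.card_range, smul_eq_mul, mul_one, ← hsum] at this
  refine ⟨u, FS_iter_tail_sub_FS a i hu, PNat.dvd_iff.mpr ?_, by omega⟩
  simpa [hsplit] using (Nat.modEq_iff_dvd' (by omega)).mp hS

theorem exists_lt_color_mul_eq_and_color_mul_add_one_eq {α : Type*} [Finite α]
    (c : ℕ+ → α) (B : ℕ) :
    ∃ x y : ℕ+, B < (y : ℕ) ∧ c (x * y) = c x ∧ c (x * (y + 1)) = c x := by
  obtain ⟨-, ⟨g, rfl⟩, a, ha⟩ := exists_FS_of_finite_cover (Set.range fun g => c ⁻¹' {g})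
    (Set.finite_range _) fun n _ => Set.mem_sUnion.mpr ⟨_, ⟨c n, rfl⟩, rfl⟩
  have hcolor : ∀ u ∈ FS a, c u = c a.head := fun u hu => (ha hu).trans (ha (FS.head a)).symm
  obtain ⟨-, hu, ⟨y, rfl⟩, hlt⟩ := exists_mem_FS_dvd_lt a.tail a.head (a.head * B)
  refine ⟨a.head, y, ?_, hcolor _ (FS.tail a _ hu), ?_⟩
  · rw [PNat.mul_coe] at hlt
    exact Nat.lt_of_mul_lt_mul_left hlt
  · rw [mul_add, mul_one, add_comm]
    exact hcolor _ (FS.cons a _ hu)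

end Hindman

theorem MonoidHom.setOf_map_eq_one_and_map_add_one_eq_one_infinite {G : Type*} [Monoid G]
    [IsLeftCancelMul G] [Finite G] (χ : ℕ+ →* G) :
    {y : ℕ+ | χ y = 1 ∧ χ (y + 1) = 1}.Infinite := by
  refine Set.infinite_of_forall_exists_gt fun B => ?_
  obtain ⟨x, y, hlt, hy, hy'⟩ :=
    Hindman.exists_lt_color_mul_eq_and_color_mul_add_one_eq χ B
  rw [map_mul, mul_eq_left] at hy hy'
  exact ⟨y, ⟨hy, hy'⟩, hlt⟩

def PNat.toPosRat : ℕ+ →* posRat where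
  toFun n := ⟨Units.mk0 (n : ℚ) (by positivity), show (0 : ℚ) < n by positivity⟩
  map_one' := by ext; simp
  map_mul' m n := by ext; simp

theorem coe_mem_posIntSet_of_toPosRat_mem {A : Subgroup posRat} {n : ℕ+}
    (h : PNat.toPosRat n ∈ A) : (n : ℕ) ∈ posIntSet A :=
  ⟨n.pos, _, h, rfl⟩

/-- If `A ≤ ℚ₊` has finite index, there are infinitely many positive integers
`a` with `a ∈ A` and `a + 1 ∈ A`. -/
theorem infinitely_many_consecutive (A : Subgroup ↥posRat) (hA : A.FiniteIndex) :
    {a : ℕ | 0 < a ∧ a ∈ posIntSet A ∧ a + 1 ∈ posIntSet A}.Infinite := by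
  have : Finite (posRat ⧸ A) := Subgroup.finite_quotient_of_finiteIndex
  let χ : ℕ+ →* posRat ⧸ A := (QuotientGroup.mk' A).comp PNat.toPosRat
  refine ((χ.setOf_map_eq_one_and_map_add_one_eq_one_infinite).image
    PNat.coe_injective.injOn).mono ?_
  rintro _ ⟨y, ⟨hy, hy'⟩, rfl⟩
  simp only [χ, MonoidHom.comp_apply, QuotientGroup.mk'_apply, QuotientGroup.eq_one_iff] at hy hy'
  exact ⟨y.pos, coe_mem_posIntSet_of_toPosRat_mem hy, coe_mem_posIntSet_of_toPosRat_mem hy'⟩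
end
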